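/- arXiv:1910.01550 — 3 statements merged into one kernel-verified Lean document; each statement's English description precedes it below -/
import Mathlib

section
/- Let (R, m, k) be a regular local ring of Krull dimension 2 and let x, y be a regular system of parameters (so m = (x, y)). Set I = m² = (x², xy, y²) and J = (x², y²). Then the colon ideal J : (xy) is strictly contained in the colon ideal (J·I) : ((xy)²). -/
/-!
If `xy ∈ (x², y²)`, write `xy = c xⁿ + d yⁿ`. A unit coefficient puts a power of `x` in `(y)` or
a power of `y` in `(x)`; otherwise expanding `c, d ∈ (x, y)` and cancelling the unit
`1 - (…)` gives `xy ∈ (xⁿ⁺¹, yⁿ⁺¹)`. If this never stops, `xy ∈ ⋂ mⁿ = 0` by Krull's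
intersection theorem, and then `x² = x(x + y)`, `y² = y(x + y)`. Either way `m` is the radical of
a principal ideal, so by Krull's principal ideal theorem `dim R = ht m ≤ 1`. Hence
`xy ∉ (x², y²)`, and `1` lies in `(J·I) : (xy)²` (as `(xy)² = x²·y²`) but not in `J : xy`.
-/

universe u

open Ideal IsLocalRing

section CommRing

variable {R : Type*} [CommRing R] {x y : R}

lemma span_pair_le_radical_span_singleton_of_pow_mem {n : ℕ} (h : x ^ n ∈ span {y}) :
    span {x, y} ≤ (span {y}).radical := by
  rw [span_le, Set.insert_subset_iff, Set.singleton_subset_iff]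
  exact ⟨⟨n, h⟩, le_radical (mem_span_singleton_self y)⟩

lemma span_pair_le_radical_span_add_of_mul_eq_zero (h : x * y = 0) :
    span {x, y} ≤ (span {x + y}).radical := by
  rw [span_le, Set.insert_subset_iff, Set.singleton_subset_iff]
  refine ⟨⟨2, mem_span_singleton'.mpr ⟨x, ?_⟩⟩, ⟨2, mem_span_singleton'.mpr ⟨y, ?_⟩⟩⟩ <;>
    linear_combination h

end CommRing

section IsLocalRing

variable {R : Type*} [CommRing R] [IsLocalRing R] {x y : R}

lemma mem_span_pow_succ_or_of_mem_span_pow (hm : maximalIdeal R = span {x, y}) {n : ℕ}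
    (hn : 2 ≤ n) (h : x * y ∈ span {x ^ n, y ^ n}) :
    x ^ n ∈ span {y} ∨ y ^ n ∈ span {x} ∨ x * y ∈ span {x ^ (n + 1), y ^ (n + 1)} := by
  obtain ⟨c, d, hcd⟩ := mem_span_pair.mp h
  obtain ⟨k, rfl⟩ := Nat.exists_eq_add_of_le' (by omega : 1 ≤ n)
  by_cases hc : IsUnit c
  · refine .inl <| (unit_mul_mem_iff_mem _ hc).mp <| mem_span_singleton'.mpr ⟨x - d * y ^ k, ?_⟩
    linear_combination -hcd
  by_cases hd : IsUnit d
  · refine .inr <| .inl <| (unit_mul_mem_iff_mem _ hd).mp <|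
      mem_span_singleton'.mpr ⟨y - c * x ^ k, ?_⟩
    linear_combination -hcd
  obtain ⟨c₁, c₂, hc₁₂⟩ := mem_span_pair.mp (hm ▸ (mem_maximalIdeal c).mpr hc)
  obtain ⟨d₁, d₂, hd₁₂⟩ := mem_span_pair.mp (hm ▸ (mem_maximalIdeal d).mpr hd)
  have hxy : x ∈ maximalIdeal R ∧ y ∈ maximalIdeal R :=
    hm ▸ ⟨subset_span (by simp), subset_span (by simp)⟩
  -- `xy ≡ (c₂ xᵏ + d₁ yᵏ) · xy` modulo `(xᵏ⁺², yᵏ⁺²)`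
  have hu : IsUnit (1 - (c₂ * x ^ k + d₁ * y ^ k)) :=
    isUnit_one_sub_self_of_mem_nonunits _ <| add_mem
      (mul_mem_left _ _ (pow_mem_of_mem _ hxy.1 _ (by omega)))
      (mul_mem_left _ _ (pow_mem_of_mem _ hxy.2 _ (by omega)))
  refine .inr <| .inr <| (unit_mul_mem_iff_mem _ hu).mp <| mem_span_pair.mpr ⟨c₁, d₂, ?_⟩
  linear_combination hcd + x ^ (k + 1) * hc₁₂ + y ^ (k + 1) * hd₁₂

variable [IsNoetherianRing R]

lemma exists_le_radical_span_singleton_of_mul_mem_span_sq (hm : maximalIdeal R = span {x, y})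
    (h : x * y ∈ span {x ^ 2, y ^ 2}) :
    ∃ z ∈ maximalIdeal R, maximalIdeal R ≤ (span {z}).radical := by
  have hxy : x ∈ maximalIdeal R ∧ y ∈ maximalIdeal R :=
    hm ▸ ⟨subset_span (by simp), subset_span (by simp)⟩
  by_contra hne
  have hpow : ∀ n, 2 ≤ n → x * y ∈ span {x ^ n, y ^ n} := by
    intro n hn
    induction n, hn using Nat.le_induction with
    | base => exact h
    | succ n hn ih =>
      rcases mem_span_pow_succ_or_of_mem_span_pow hm hn ih with hx | hy | hxy'
      · exact (hne ⟨y, hxy.2, hm ▸ span_pair_le_radical_span_singleton_of_pow_mem hx⟩).elim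
      · refine (hne ⟨x, hxy.1, ?_⟩).elim
        rw [hm, Set.pair_comm]
        exact span_pair_le_radical_span_singleton_of_pow_mem hy
      · exact hxy'
  have hzero : x * y = 0 := by
    have hbot := iInf_pow_eq_bot_of_isLocalRing (maximalIdeal R) (maximalIdeal.isMaximal R).ne_top
    refine (Submodule.mem_bot R).mp <| hbot ▸ Submodule.mem_iInf _ |>.mpr fun n ↦ ?_
    refine pow_le_pow_right (by omega : n ≤ n + 2) <| span_le.mpr ?_ (hpow (n + 2) (by omega))
    rintro _ (rfl | rfl)
    exacts [pow_mem_pow hxy.1 _, pow_mem_pow hxy.2 _]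
  exact hne ⟨x + y, add_mem hxy.1 hxy.2, hm ▸ span_pair_le_radical_span_add_of_mul_eq_zero hzero⟩

lemma ringKrullDim_le_one_of_le_radical_span_singleton {z : R} (hz : z ∈ maximalIdeal R)
    (h : maximalIdeal R ≤ (span {z}).radical) : ringKrullDim R ≤ 1 := by
  have hrad : (span {z}).radical = maximalIdeal R :=
    le_antisymm ((radical_mono (span_singleton_le_iff_mem _ |>.mpr hz)).trans
      (maximalIdeal.isMaximal R).isPrime.radical.le) h
  have hmin : maximalIdeal R ∈ (span {z}).minimalPrimes := by
    rw [← radical_minimalPrimes, hrad, minimalPrimes_eq_subsingleton_self]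
    rfl
  rw [← maximalIdeal_height_eq_ringKrullDim]
  exact_mod_cast height_le_one_of_isPrincipal_of_mem_minimalPrimes _ _ hmin

lemma mul_notMem_span_sq_of_ringKrullDim_eq_two (hdim : ringKrullDim R = 2)
    (hm : maximalIdeal R = span {x, y}) : x * y ∉ span {x ^ 2, y ^ 2} := by
  intro h
  obtain ⟨z, hz, hle⟩ := exists_le_radical_span_singleton_of_mul_mem_span_sq hm h
  have := ringKrullDim_le_one_of_le_radical_span_singleton hz hle
  rw [hdim] at this
  exact absurd this (by decide)

end IsLocalRing

theorem colon_lt_colon_sq_general {R : Type u} [CommRing R] [IsNoetherianRing R] [IsLocalRing R]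
    (x y : R) (hdim : ringKrullDim R = 2)
    (hm : IsLocalRing.maximalIdeal R = Ideal.span {x, y})
    (I J : Ideal R) (hI : I = Ideal.span {x ^ 2, x * y, y ^ 2})
    (hJ : J = Ideal.span {x ^ 2, y ^ 2}) :
    J.colon (Ideal.span {x * y}) < (J * I).colon (Ideal.span {(x * y) ^ 2}) := by
  have hxyJ : x * y ∉ J := hJ ▸ mul_notMem_span_sq_of_ringKrullDim_eq_two hdim hm
  have hxyI : x * y ∈ I := hI ▸ subset_span (by simp)
  have hx2J : x ^ 2 ∈ J := hJ ▸ subset_span (by simp)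
  have hy2I : y ^ 2 ∈ I := hI ▸ subset_span (by simp)
  refine SetLike.lt_iff_le_and_exists.mpr ⟨fun r hr ↦ ?_, 1, ?_, ?_⟩
  · rw [Submodule.mem_colon_span_singleton, smul_eq_mul] at hr ⊢
    simpa only [sq, ← mul_assoc] using mul_mem_mul hr hxyI
  · rw [Submodule.mem_colon_span_singleton, smul_eq_mul, one_mul, mul_pow]
    exact mul_mem_mul hx2J hy2I
  · rwa [Submodule.mem_colon_span_singleton, smul_eq_mul, one_mul]

/-- In a regular local ring of Krull dimension `2` with regular system of parameters
`x, y`, setting `I = m² = (x², xy, y²)` and `J = (x², y²)`, the colon ideal `J : xy`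
is strictly contained in `(J·I) : (xy)²`. -/
theorem colon_lt_colon_sq {R : Type u} [CommRing R] [IsNoetherianRing R] [IsLocalRing R]
    (x y : R) (hdim : ringKrullDim R = 2)
    (hm : IsLocalRing.maximalIdeal R = Ideal.span {x, y})
    (I J : Ideal R) (hI : I = Ideal.span {x ^ 2, x * y, y ^ 2})
    (hI' : I = (IsLocalRing.maximalIdeal R) ^ 2)
    (hJ : J = Ideal.span {x ^ 2, y ^ 2}) :
    J.colon (Ideal.span {x * y}) < (J * I).colon (Ideal.span {(x * y) ^ 2}) :=
  colon_lt_colon_sq_general x y hdim hm I J hI hJ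
end

section
/- Let (R, m, k) be a regular local ring of Krull dimension 4 with regular system of parameters x, y, z, t, and let f₁ = yz − xt, f₂ = z³ − x⁵, f₃ = z²t − x⁴y, f₄ = zt² − x³y², f₅ = t³ − x²y³, f₆ = y⁴ − x⁵, f₇ = y³t − x⁴z, f₈ = y²t² − x³z². Then f₈ does not belong to the ideal H = (f₁, f₂, f₃, f₄, f₅, f₆, f₇). -/
/-!
Since cutting a local ring by two elements lowers its dimension by at most two, some prime
`P ⊇ (x, z)` has `dim R/P ≥ 2`. In the local domain `D = R/P`, whose maximal ideal is `(y, t)`,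
the ideal `H` maps into `(t³, y³)` while `f₈` maps to `y²t²`. Krull's principal ideal theorem and
Nakayama's lemma show that `(y)` is a prime of `D` not containing `t`; cancelling `y` twice then
turns `y²t² ∈ (t³, y³)` into `t²(1 - ct) ∈ (y)`, which is impossible.
-/

open IsLocalRing Ideal

theorem exists_le_isPrime_and_le_ringKrullDim_quotient {R : Type*} [CommRing R] {I : Ideal R}
    {n : ℕ} (h : n ≤ ringKrullDim (R ⧸ I)) :
    ∃ P : Ideal R, P.IsPrime ∧ I ≤ P ∧ n ≤ ringKrullDim (R ⧸ P) := by
  rw [ringKrullDim_quotient] at h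
  obtain ⟨l, hl⟩ := Order.le_krullDim_iff.mp h
  refine ⟨l.head.1.asIdeal, l.head.1.isPrime, l.head.2, ?_⟩
  rw [ringKrullDim_quotient]
  let l' : LTSeries (PrimeSpectrum.zeroLocus (R := R) l.head.1.asIdeal) :=
    { length := l.length
      toFun i := ⟨(l i).1, (PrimeSpectrum.mem_zeroLocus _ _).mpr (l.head_le i)⟩
      step i := l.step i }
  exact Order.le_krullDim_iff.mpr ⟨l', hl⟩

theorem le_ringKrullDim_quotient_span {R : Type*} [CommRing R] [IsNoetherianRing R]
    [IsLocalRing R] {s : Finset R} (hs : (s : Set R) ⊆ maximalIdeal R) {m : ℕ}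
    (hdim : (m + s.card : ℕ) ≤ ringKrullDim R) : m ≤ ringKrullDim (R ⧸ span (s : Set R)) := by
  have := hdim.trans (ringKrullDim_le_ringKrullDim_quotient_add_card s
    (by rwa [ringJacobson_eq_maximalIdeal]))
  push_cast at this
  exact ENat.WithBot.add_le_add_natCast_right_iff.mp this

namespace IsLocalRing

variable {D : Type*} [CommRing D] [IsNoetherianRing D] [IsLocalRing D]

theorem exists_isPrime_mem_ne_maximalIdeal (hdim : 2 ≤ ringKrullDim D) {a : D}
    (ha : a ∈ maximalIdeal D) : ∃ P : Ideal D, P.IsPrime ∧ a ∈ P ∧ P ≠ maximalIdeal D := by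
  by_contra! h
  have hmin : maximalIdeal D ∈ (span {a}).minimalPrimes :=
    ⟨⟨inferInstance, (span_singleton_le_iff_mem _).mpr ha⟩, fun Q ⟨hQ, haQ⟩ _ ↦
      (h Q hQ ((span_singleton_le_iff_mem _).mp haQ)).ge⟩
  have hheight := height_le_one_of_isPrincipal_of_mem_minimalPrimes _ _ hmin
  rw [← maximalIdeal_height_eq_ringKrullDim] at hdim
  have := hdim.trans (WithBot.coe_le_coe.mpr hheight)
  norm_num at this

theorem isPrime_span_singleton_and_notMem_of_maximalIdeal_eq_span_pair
    (hdim : 2 ≤ ringKrullDim D) {a b : D} (hab : maximalIdeal D = span {a, b}) :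
    (span {a}).IsPrime ∧ b ∉ span {a} := by
  obtain ⟨P, hP, haP, hPm⟩ :=
    exists_isPrime_mem_ne_maximalIdeal hdim (hab ▸ subset_span (Set.mem_insert a {b}))
  have hbm : b ∈ maximalIdeal D := hab ▸ subset_span (Set.mem_insert_of_mem a rfl)
  have hbP : b ∉ P := fun hbP ↦ hPm <| le_antisymm (le_maximalIdeal hP.ne_top) <| by
    rw [hab, span_le]
    rintro c (rfl | rfl) <;> assumption
  -- `p = c a + d b ∈ P` forces `d ∈ P`, so `P ≤ (a) + m P`, and Nakayama gives `P ≤ (a)`.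
  have hPa : P ≤ span {a} := by
    refine Submodule.le_of_le_smul_of_le_jacobson_bot (IsNoetherian.noetherian P)
      (jacobson_eq_maximalIdeal ⊥ bot_ne_top).ge fun p hp ↦ ?_
    obtain ⟨c, d, rfl⟩ := mem_span_pair.mp (hab ▸ le_maximalIdeal hP.ne_top hp)
    have hdP : d ∈ P :=
      (hP.mem_or_mem ((P.add_mem_iff_right (P.mul_mem_left c haP)).mp hp)).resolve_right hbP
    exact add_mem (mem_sup_left (mem_span_singleton'.mpr ⟨c, rfl⟩))
      (mem_sup_right (by rw [mul_comm]; exact Submodule.smul_mem_smul hbm hdP))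
  have hP_eq : P = span {a} := le_antisymm hPa ((span_singleton_le_iff_mem _).mpr haP)
  exact ⟨hP_eq ▸ hP, hP_eq ▸ hbP⟩

end IsLocalRing

theorem pow_mul_sq_notMem_span_pair {D : Type*} [CommRing D] {a b : D}
    (ha : (span {a}).IsPrime) (ha0 : a ∈ nonZeroDivisors D) (hb : b ∉ span {a})
    (hab : span {a, b} ≠ ⊤) (n : ℕ) : a ^ n * b ^ 2 ∉ span {b ^ 3, a ^ (n + 1)} := by
  induction n with
  | zero =>
    rintro h
    obtain ⟨c, d, hcd⟩ := mem_span_pair.mp h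
    have hmem : b ^ 2 * (1 - c * b) ∈ span {a} :=
      mem_span_singleton'.mpr ⟨d, by linear_combination hcd⟩
    rcases ha.mem_or_mem hmem with hb2 | hunit
    · exact hb (ha.mem_of_pow_mem 2 hb2)
    · refine hab (eq_top_of_isUnit_mem _ ?_ isUnit_one)
      rw [show (1 : D) = (1 - c * b) + c * b by ring]
      exact add_mem (span_mono (by simp) hunit) (mul_mem_left _ c (subset_span (by simp)))
  | succ n ih =>
    rintro h
    obtain ⟨c, d, hcd⟩ := mem_span_pair.mp h
    have hc : c * b ^ 3 ∈ span {a} :=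
      mem_span_singleton'.mpr ⟨a ^ n * b ^ 2 - d * a ^ (n + 1), by linear_combination -hcd⟩
    obtain ⟨c', rfl⟩ := mem_span_singleton'.mp <|
      (ha.mem_or_mem hc).resolve_right fun hb3 ↦ hb (ha.mem_of_pow_mem 3 hb3)
    have hcancel : (a ^ n * b ^ 2 - c' * b ^ 3 - d * a ^ (n + 1)) * a = 0 := by
      linear_combination -hcd
    refine ih (mem_span_pair.mpr ⟨c', d, ?_⟩)
    linear_combination -(mem_nonZeroDivisors_iff_right.mp ha0 _ hcancel)

theorem map_span_f₁_to_f₇_le {R S : Type*} [CommRing R] [CommRing S] (φ : R →+* S)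
    {x y z t : R} (hx : φ x = 0) (hz : φ z = 0) :
    (span {y * z - x * t, z ^ 3 - x ^ 5, z ^ 2 * t - x ^ 4 * y, z * t ^ 2 - x ^ 3 * y ^ 2,
      t ^ 3 - x ^ 2 * y ^ 3, y ^ 4 - x ^ 5, y ^ 3 * t - x ^ 4 * z}).map φ ≤
      span {φ t ^ 3, φ y ^ 3} := by
  rw [map_span, span_le]
  simp only [Set.image_insert_eq, Set.image_singleton, Set.insert_subset_iff,
    Set.singleton_subset_iff, map_sub, map_mul, map_pow, hx, hz, SetLike.mem_coe]
  exact ⟨by simp, by simp, by simp, by simp, mem_span_pair.mpr ⟨1, 0, by ring⟩,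
    mem_span_pair.mpr ⟨0, φ y, by ring⟩, mem_span_pair.mpr ⟨0, φ t, by ring⟩⟩

universe u

/-- In a regular local ring of Krull dimension `4` with regular system of parameters
`x, y, z, t`, the element `f₈` does not belong to the ideal `H = (f₁, …, f₇)`. -/
theorem f8_not_mem_H {R : Type u} [CommRing R] [IsNoetherianRing R] [IsLocalRing R]
    (x y z t : R) (hdim : ringKrullDim R = 4)
    (hm : IsLocalRing.maximalIdeal R = Ideal.span {x, y, z, t})
    (f₁ f₂ f₃ f₄ f₅ f₆ f₇ f₈ : R)
    (hf₁ : f₁ = y * z - x * t)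
    (hf₂ : f₂ = z ^ 3 - x ^ 5)
    (hf₃ : f₃ = z ^ 2 * t - x ^ 4 * y)
    (hf₄ : f₄ = z * t ^ 2 - x ^ 3 * y ^ 2)
    (hf₅ : f₅ = t ^ 3 - x ^ 2 * y ^ 3)
    (hf₆ : f₆ = y ^ 4 - x ^ 5)
    (hf₇ : f₇ = y ^ 3 * t - x ^ 4 * z)
    (hf₈ : f₈ = y ^ 2 * t ^ 2 - x ^ 3 * z ^ 2)
    (H : Ideal R) (hH : H = Ideal.span {f₁, f₂, f₃, f₄, f₅, f₆, f₇}) :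
    f₈ ∉ H := by
  subst hf₁ hf₂ hf₃ hf₄ hf₅ hf₆ hf₇ hf₈ hH
  intro hmem
  classical
  have hxz : (({x, z} : Finset R) : Set R) ⊆ maximalIdeal R := by
    simp only [Finset.coe_insert, Finset.coe_singleton, Set.insert_subset_iff,
      Set.singleton_subset_iff, hm]
    exact ⟨subset_span (by simp), subset_span (by simp)⟩
  obtain ⟨P, hP, hxzP, hdimP⟩ := exists_le_isPrime_and_le_ringKrullDim_quotient <|
    le_ringKrullDim_quotient_span hxz (m := 2) (by
      rw [hdim]; exact_mod_cast Nat.add_le_add_left Finset.card_le_two 2)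
  let π := Ideal.Quotient.mk P
  have : IsLocalRing (R ⧸ P) := .of_surjective' π Ideal.Quotient.mk_surjective
  have hx0 : π x = 0 := Quotient.eq_zero_iff_mem.mpr (hxzP (subset_span (by simp)))
  have hz0 : π z = 0 := Quotient.eq_zero_iff_mem.mpr (hxzP (subset_span (by simp)))
  have hmP : maximalIdeal (R ⧸ P) = span {π y, π t} := by
    rw [← map_maximalIdeal_of_surjective π Ideal.Quotient.mk_surjective, hm, map_span]
    simp only [Set.image_insert_eq, Set.image_singleton, hx0, hz0]
    rw [span_insert_zero, Set.insert_comm, span_insert_zero]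
  obtain ⟨hyPrime, htY⟩ := isPrime_span_singleton_and_notMem_of_maximalIdeal_eq_span_pair hdimP hmP
  have hyt : π y ∉ span {π t} := (isPrime_span_singleton_and_notMem_of_maximalIdeal_eq_span_pair
    hdimP (hmP.trans (by rw [Set.pair_comm]))).2
  have hy0 : π y ≠ 0 := fun h0 ↦ hyt (h0 ▸ zero_mem _)
  refine pow_mul_sq_notMem_span_pair hyPrime (mem_nonZeroDivisors_of_ne_zero hy0) htY
    (hmP ▸ (maximalIdeal.isMaximal _).ne_top) 2 ?_
  simpa [hx0, hz0] using map_span_f₁_to_f₇_le π hx0 hz0 (mem_map_of_mem π hmem)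
end

section
/- Let (R, m, k) be a regular local ring of Krull dimension 4 with regular system of parameters x, y, z, t, and let f₁ = yz − xt, f₂ = z³ − x⁵, f₅ = t³ − x²y³, f₆ = y⁴ − x⁵, f₇ = y³t − x⁴z, f₈ = y²t² − x³z². Then f₈² = x²yzt·f₁² − x⁴·f₁f₅ − x²·f₂f₇ + t·f₅f₆ + x²·f₆f₇. In particular, setting H = (f₁, …, f₇) and I = (f₁, …, f₈) (with f₃ = z²t − x⁴y, f₄ = zt² − x³y²), one has f₈² ∈ H·I. -/
universe u v

/-- In a regular local ring of Krull dimension `4` with regular system of parameters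
`x, y, z, t`, one has `f₈² = x²yzt·f₁² − x⁴·f₁f₅ − x²·f₂f₇ + t·f₅f₆ + x²·f₆f₇`;
in particular `f₈² ∈ H·I` where `H = (f₁, …, f₇)` and `I = (f₁, …, f₈)`. -/
theorem f8_sq_eq_and_mem_HI {R : Type u} [CommRing R] [IsNoetherianRing R] [IsLocalRing R]
    (x y z t : R) (hdim : ringKrullDim R = 4)
    (hm : IsLocalRing.maximalIdeal R = Ideal.span {x, y, z, t})
    (f₁ f₂ f₃ f₄ f₅ f₆ f₇ f₈ : R)
    (hf₁ : f₁ = y * z - x * t)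
    (hf₂ : f₂ = z ^ 3 - x ^ 5)
    (hf₃ : f₃ = z ^ 2 * t - x ^ 4 * y)
    (hf₄ : f₄ = z * t ^ 2 - x ^ 3 * y ^ 2)
    (hf₅ : f₅ = t ^ 3 - x ^ 2 * y ^ 3)
    (hf₆ : f₆ = y ^ 4 - x ^ 5)
    (hf₇ : f₇ = y ^ 3 * t - x ^ 4 * z)
    (hf₈ : f₈ = y ^ 2 * t ^ 2 - x ^ 3 * z ^ 2)
    (H I : Ideal R) (hH : H = Ideal.span {f₁, f₂, f₃, f₄, f₅, f₆, f₇})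
    (hI : I = Ideal.span {f₁, f₂, f₃, f₄, f₅, f₆, f₇, f₈}) :
    f₈ ^ 2 = x ^ 2 * y * z * t * f₁ ^ 2 - x ^ 4 * (f₁ * f₅) - x ^ 2 * (f₂ * f₇)
        + t * (f₅ * f₆) + x ^ 2 * (f₆ * f₇) ∧
      f₈ ^ 2 ∈ H * I := by
  have h1 : f₁ ∈ H := by
    rw [hH]; exact Ideal.subset_span (by simp)
  have h2 : f₂ ∈ H := by
    rw [hH]; exact Ideal.subset_span (by simp)
  have h5 : f₅ ∈ H := by
    rw [hH]; exact Ideal.subset_span (by simp)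
  have h6 : f₆ ∈ H := by
    rw [hH]; exact Ideal.subset_span (by simp)
  have i1 : f₁ ∈ I := by
    rw [hI]; exact Ideal.subset_span (by simp)
  have i5 : f₅ ∈ I := by
    rw [hI]; exact Ideal.subset_span (by simp)
  have i6 : f₆ ∈ I := by
    rw [hI]; exact Ideal.subset_span (by simp)
  have i7 : f₇ ∈ I := by
    rw [hI]; exact Ideal.subset_span (by simp)
  have heq : f₈ ^ 2 = x ^ 2 * y * z * t * f₁ ^ 2 - x ^ 4 * (f₁ * f₅) - x ^ 2 * (f₂ * f₇)
      + t * (f₅ * f₆) + x ^ 2 * (f₆ * f₇) := by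
    subst hf₁ hf₂ hf₅ hf₆ hf₇ hf₈; ring
  refine ⟨heq, ?_⟩
  rw [heq]
  have m1 : x ^ 2 * y * z * t * f₁ ^ 2 ∈ H * I := by
    have := Ideal.mul_mem_mul h1 i1
    rw [show f₁ ^ 2 = f₁ * f₁ by ring] at *
    exact Ideal.mul_mem_left _ _ this
  have m2 : x ^ 4 * (f₁ * f₅) ∈ H * I :=
    Ideal.mul_mem_left _ _ (Ideal.mul_mem_mul h1 i5)
  have m3 : x ^ 2 * (f₂ * f₇) ∈ H * I :=
    Ideal.mul_mem_left _ _ (Ideal.mul_mem_mul h2 i7)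
  have m4 : t * (f₅ * f₆) ∈ H * I :=
    Ideal.mul_mem_left _ _ (Ideal.mul_mem_mul h5 i6)
  have m5 : x ^ 2 * (f₆ * f₇) ∈ H * I :=
    Ideal.mul_mem_left _ _ (Ideal.mul_mem_mul h6 i7)
  exact add_mem (add_mem (sub_mem (sub_mem m1 m2) m3) m4) m5
end
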